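/- arXiv:1507.00393 — 6 statements merged into one kernel-verified Lean document; each statement's English description precedes it below -/
import Mathlib

section
/- There exists a unique bounded function q : [0,∞) → [0,∞) such that q(t) = e^t for 0 ≤ t < 1 and q(t) = ∫_{t-1}^t q(u) du for t ≥ 1. -/
/-!
Comparison principle: if `f` is a subsolution and `g` a supersolution of `q t = ∫_{t-1}^t q`
with `f ≤ g` on `[0, 1)`, then on each window `[a, a + 1]` the difference `h = f - g` satisfies
`h t ≤ ∫_a^t h`, and iterating this (`h ≤ M (t - a)^n / n!`) gives `h ≤ 0`. Applied in both
directions it gives uniqueness, and against the constants `0` and `e` the bounds of the solution.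

The solution is `q t = ∑_{k ≤ ⌊t⌋} G_k' t` with `G_k t = (-1)^k e^{t-k} (t-k)^k / k!`. Since
`G_{k+1}' t = G_{k+1} t - G_k (t - 1)`, the partial sums `S_n = ∑_{k ≤ n} G_k` satisfy
`q t = S_n t - S_{n-1} (t - 1)` on `[n, n + 1)` for `n ≥ 1`, and `S_n n = S_{n-1} n`, so
`S_{n-1}` and `S_n` together form an antiderivative of `q` across `[t - 1, t]`.

A solution need not be integrable a priori; but the integral of a non-integrable function is `0`,
so the equation makes it vanish wherever integrability first fails, and boundedness then
forces integrability on each `[n, n + 1]`.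
-/

open MeasureTheory Set Filter

open Nat in
theorem nonpos_of_le_integral {g : ℝ → ℝ} {a b : ℝ} (hg : IntervalIntegrable g volume a b)
    (h : ∀ t ∈ Icc a b, g t ≤ ∫ s in a..t, g s) : ∀ t ∈ Icc a b, g t ≤ 0 := by
  set M := ∫ s in a..b, |g s|
  have hg_sub {t : ℝ} (ht : t ∈ Icc a b) : IntervalIntegrable g volume a t :=
    hg.mono_set (uIcc_subset_uIcc left_mem_uIcc (mem_uIcc_of_le ht.1 ht.2))
  have key (n : ℕ) : ∀ t ∈ Icc a b, g t ≤ M * (t - a) ^ n / n ! := by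
    induction n with
    | zero =>
      intro t ht
      calc g t ≤ ∫ s in a..t, g s := h t ht
        _ ≤ ∫ s in a..t, |g s| :=
          intervalIntegral.integral_mono_on ht.1 (hg_sub ht) (hg_sub ht).abs
            fun s _ => le_abs_self _
        _ ≤ M := intervalIntegral.integral_mono_interval le_rfl ht.1 ht.2
            (Eventually.of_forall fun s => abs_nonneg _) hg.abs
        _ = M * (t - a) ^ 0 / 0 ! := by simp
    | succ n ih =>
      intro t ht
      calc g t ≤ ∫ s in a..t, g s := h t ht
        _ ≤ ∫ s in a..t, M * (s - a) ^ n / n ! :=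
          intervalIntegral.integral_mono_on ht.1 (hg_sub ht)
            (Continuous.intervalIntegrable (by fun_prop) _ _)
            fun s hs => ih s ⟨hs.1, hs.2.trans ht.2⟩
        _ = M * (t - a) ^ (n + 1) / (n + 1) ! := by
          rw [intervalIntegral.integral_div, intervalIntegral.integral_const_mul,
            intervalIntegral.integral_comp_sub_right (fun s => s ^ n), integral_pow,
            Nat.factorial_succ]
          push_cast
          field_simp
          ring
  intro t ht
  have hlim : Tendsto (fun n : ℕ => M * (t - a) ^ n / n !) atTop (nhds 0) := by
    simpa [mul_div_assoc] using (FloorSemiring.tendsto_pow_div_factorial_atTop (t - a)).const_mul M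
  exact ge_of_tendsto' hlim fun n => key n t ht

theorem integrableOn_Ioc_of_eq_zero_of_not_integrableOn {f : ℝ → ℝ} {a b C : ℝ}
    (hbdd : ∀ t ∈ Ioc a b, ‖f t‖ ≤ C)
    (hzero : ∀ t ∈ Ioc a b, ¬ IntegrableOn f (Ioc a t) → f t = 0) :
    IntegrableOn f (Ioc a b) := by
  set G := Ioc a b ∩ {t | IntegrableOn f (Ioc a t)}
  have hG : MeasurableSet G := by
    refine (OrdConnected.inter ordConnected_Ioc (IsLowerSet.ordConnected ?_)).measurableSet
    exact fun s t hts hs => hs.mono_set (Ioc_subset_Ioc_right hts)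
  have hloc : LocallyIntegrableOn f G := by
    intro x hx
    by_cases hy : ∃ y ∈ G, x < y
    · obtain ⟨y, hyG, hxy⟩ := hy
      exact ⟨Ioc a y, mem_nhdsWithin_of_mem_nhds
        (mem_of_superset (Ioo_mem_nhds hx.1.1 hxy) Ioo_subset_Ioc_self), hyG.2⟩
    · push Not at hy
      exact ⟨Ioc a x, mem_of_superset self_mem_nhdsWithin fun y hy' => ⟨hy'.1.1, hy y hy'⟩,
        hx.2⟩
  have hGint : IntegrableOn f G :=
    Integrable.mono' (integrableOn_const (C := C)
        ((measure_mono inter_subset_left).trans_lt measure_Ioc_lt_top).ne)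
      hloc.aestronglyMeasurable
      ((ae_restrict_iff' hG).2 (Eventually.of_forall fun t ht => hbdd t ht.1))
  have hrest : IntegrableOn f (Ioc a b \ G) :=
    integrableOn_zero.congr_fun (fun t ht => (hzero t ht.1 fun h => ht.2 ⟨ht.1, h⟩).symm)
      (measurableSet_Ioc.diff hG)
  rw [← union_sdiff_cancel (inter_subset_left : G ⊆ Ioc a b)]
  exact hGint.union hrest

theorem intervalIntegrable_natCast_add_two {f : ℝ → ℝ}
    (hf : ∀ n : ℕ, IntegrableOn f (Ioc (n : ℝ) (n + 1))) (n : ℕ) :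
    IntervalIntegrable f volume n (n + 1 + 1) := by
  have h (m : ℕ) : IntervalIntegrable f volume m (m + 1) :=
    (intervalIntegrable_iff_integrableOn_Ioc_of_le (by linarith)).2 (hf m)
  exact (h n).trans (by simpa using h (n + 1))

namespace DelayEquation

theorem comparison_on_Icc {f g : ℝ → ℝ} {a : ℝ}
    (hf : IntervalIntegrable f volume (a - 1) (a + 1))
    (hg : IntervalIntegrable g volume (a - 1) (a + 1))
    (hle : ∀ t ∈ Ico (a - 1) a, f t ≤ g t)
    (hf_sub : ∀ t ∈ Icc a (a + 1), f t ≤ ∫ u in (t - 1)..t, f u)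
    (hg_super : ∀ t ∈ Icc a (a + 1), ∫ u in (t - 1)..t, g u ≤ g t) :
    ∀ t ∈ Icc a (a + 1), f t ≤ g t := by
  have hsub {x y : ℝ} (hx : a - 1 ≤ x) (hxy : x ≤ y) (hy : y ≤ a + 1) :
      IntervalIntegrable (fun u => f u - g u) volume x y :=
    (hf.sub hg).mono_set (uIcc_subset_uIcc (mem_uIcc_of_le hx (by linarith))
      (mem_uIcc_of_le (by linarith) hy))
  suffices ∀ t ∈ Icc a (a + 1), f t - g t ≤ 0 from fun t ht => sub_nonpos.1 (this t ht)
  refine nonpos_of_le_integral (hsub (by linarith) (by linarith) le_rfl) fun t ht => ?_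
  obtain ⟨hat, hta⟩ := ht
  have hpast : ∫ u in (t - 1)..a, f u - g u ≤ 0 := by
    refine (intervalIntegral.integral_mono_on_of_le_Ioo (by linarith)
      (hsub (by linarith) (by linarith) (by linarith)) intervalIntegrable_const
      fun u hu => sub_nonpos.2 (hle u ⟨by linarith [hu.1], hu.2⟩)).trans_eq (by simp)
  have hsplit := intervalIntegral.integral_add_adjacent_intervals
    (hsub (x := t - 1) (y := a) (by linarith) (by linarith) (by linarith))
    (hsub (by linarith) hat hta)
  have hwindow : ∫ u in (t - 1)..t, f u - g u
      = (∫ u in (t - 1)..t, f u) - ∫ u in (t - 1)..t, g u :=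
    intervalIntegral.integral_sub
      (hf.mono_set (uIcc_subset_uIcc (mem_uIcc_of_le (by linarith) (by linarith))
        (mem_uIcc_of_le (by linarith) hta)))
      (hg.mono_set (uIcc_subset_uIcc (mem_uIcc_of_le (by linarith) (by linarith))
        (mem_uIcc_of_le (by linarith) hta)))
  linarith [hf_sub t ⟨hat, hta⟩, hg_super t ⟨hat, hta⟩]

theorem comparison {f g : ℝ → ℝ}
    (hf : ∀ n : ℕ, IntegrableOn f (Ioc (n : ℝ) (n + 1)))
    (hg : ∀ n : ℕ, IntegrableOn g (Ioc (n : ℝ) (n + 1)))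
    (hle : ∀ t ∈ Ico 0 1, f t ≤ g t)
    (hf_sub : ∀ t, 1 ≤ t → f t ≤ ∫ u in (t - 1)..t, f u)
    (hg_super : ∀ t, 1 ≤ t → ∫ u in (t - 1)..t, g u ≤ g t) :
    ∀ t, 0 ≤ t → f t ≤ g t := by
  have key (n : ℕ) : ∀ t ∈ Ico 0 ((n : ℝ) + 1), f t ≤ g t := by
    induction n with
    | zero => simpa using hle
    | succ n ih =>
      intro t ⟨ht0, htn⟩
      rcases lt_or_ge t (n + 1) with h | h
      · exact ih t ⟨ht0, h⟩
      have hn : (0 : ℝ) ≤ n := n.cast_nonneg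
      refine comparison_on_Icc (a := n + 1)
        (by simpa using intervalIntegrable_natCast_add_two hf n)
        (by simpa using intervalIntegrable_natCast_add_two hg n)
        (fun s hs => ih s ⟨by linarith [hs.1], hs.2⟩)
        (fun s hs => hf_sub s (by linarith [hs.1])) (fun s hs => hg_super s (by linarith [hs.1]))
        t ⟨h, by push_cast at htn; linarith⟩
  exact fun t ht => key ⌊t⌋₊ t ⟨ht, Nat.lt_floor_add_one t⟩

theorem integrableOn_Ioc_of_bounded_solution {q : ℝ → ℝ} {C : ℝ}
    (h0 : ∀ t, 0 ≤ t → 0 ≤ q t) (hC : ∀ t, 0 ≤ t → q t ≤ C)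
    (hexp : ∀ t, 0 ≤ t → t < 1 → q t = Real.exp t)
    (heq : ∀ t, 1 ≤ t → q t = ∫ u in (t - 1)..t, q u) (n : ℕ) :
    IntegrableOn q (Ioc (n : ℝ) (n + 1)) := by
  cases n with
  | zero =>
    rw [Nat.cast_zero, zero_add, integrableOn_Ioc_iff_integrableOn_Ioo]
    exact (Real.continuous_exp.integrableOn_Icc.mono_set Ioo_subset_Icc_self).congr_fun
      (fun t ht => (hexp t ht.1.le ht.2).symm) measurableSet_Ioo
  | succ n =>
    have hn : (0 : ℝ) ≤ n := n.cast_nonneg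
    refine integrableOn_Ioc_of_eq_zero_of_not_integrableOn (C := C) (fun t ht => ?_)
      fun t ht hnot => ?_
    · push_cast at ht
      rw [Real.norm_of_nonneg (h0 t (by linarith [ht.1]))]
      exact hC t (by linarith [ht.1])
    · push_cast at ht
      rw [heq t (by linarith [ht.1]), intervalIntegral.integral_undef]
      rw [intervalIntegrable_iff_integrableOn_Ioc_of_le (by linarith)]
      exact fun h => hnot (h.mono_set (Ioc_subset_Ioc_left (by push_cast; linarith [ht.2])))

open Nat in
noncomputable def antiderivTerm (k : ℕ) (t : ℝ) : ℝ :=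
  (-1) ^ k * Real.exp (t - k) * (t - k) ^ k / k !

noncomputable def term : ℕ → ℝ → ℝ
  | 0, t => Real.exp t
  | k + 1, t => antiderivTerm (k + 1) t - antiderivTerm k (t - 1)

theorem antiderivTerm_zero : antiderivTerm 0 = Real.exp := by
  funext t; simp [antiderivTerm]

open Nat in
theorem hasDerivAt_antiderivTerm (k : ℕ) (t : ℝ) :
    HasDerivAt (antiderivTerm k) (term k t) t := by
  cases k with
  | zero => rw [antiderivTerm_zero]; exact Real.hasDerivAt_exp t
  | succ k =>
    have hlin : HasDerivAt (fun s : ℝ => s - (k + 1 : ℕ)) 1 t := (hasDerivAt_id t).sub_const _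
    have h := (((hlin.exp.const_mul ((-1 : ℝ) ^ (k + 1))).mul (hlin.fun_pow (k + 1))).div_const
      ((k + 1) ! : ℝ))
    refine h.congr_deriv ?_
    simp only [term, antiderivTerm, Nat.factorial_succ]
    push_cast
    field_simp
    ring_nf

theorem continuous_antiderivTerm (k : ℕ) : Continuous (antiderivTerm k) :=
  continuous_iff_continuousAt.2 fun t => (hasDerivAt_antiderivTerm k t).continuousAt

theorem antiderivTerm_natCast_self {k : ℕ} (hk : k ≠ 0) : antiderivTerm k k = 0 := by
  simp [antiderivTerm, hk]

noncomputable def antideriv (n : ℕ) (t : ℝ) : ℝ :=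
  ∑ k ∈ Finset.range (n + 1), antiderivTerm k t

noncomputable def piece (n : ℕ) (t : ℝ) : ℝ := ∑ k ∈ Finset.range (n + 1), term k t

noncomputable def sol (t : ℝ) : ℝ := piece ⌊t⌋₊ t

theorem hasDerivAt_antideriv (n : ℕ) (t : ℝ) : HasDerivAt (antideriv n) (piece n t) t :=
  HasDerivAt.fun_sum fun k _ => hasDerivAt_antiderivTerm k t

theorem continuous_antideriv (n : ℕ) : Continuous (antideriv n) :=
  continuous_iff_continuousAt.2 fun t => (hasDerivAt_antideriv n t).continuousAt

theorem continuous_piece (n : ℕ) : Continuous (piece n) := by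
  refine continuous_finsetSum _ fun k _ => ?_
  cases k with
  | zero => exact Real.continuous_exp
  | succ k =>
    exact (continuous_antiderivTerm _).sub
      ((continuous_antiderivTerm k).comp (continuous_sub_right 1))

theorem piece_succ (n : ℕ) (t : ℝ) :
    piece (n + 1) t = antideriv (n + 1) t - antideriv n (t - 1) := by
  simp only [piece, antideriv, Finset.sum_range_succ' _ (n + 1), term, Finset.sum_sub_distrib,
    antiderivTerm_zero]
  ring

theorem antideriv_succ_natCast_succ (n : ℕ) :
    antideriv (n + 1) (n + 1) = antideriv n (n + 1) := by
  rw [antideriv, Finset.sum_range_succ, ← Nat.cast_succ,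
    antiderivTerm_natCast_self n.succ_ne_zero,
    add_zero, Nat.cast_succ, antideriv]

theorem sol_eq_piece {n : ℕ} {t : ℝ} (ht : t ∈ Ico (n : ℝ) (n + 1)) :
    sol t = piece n t := by
  rw [sol, (Nat.floor_eq_iff (n.cast_nonneg.trans ht.1)).2 ht]

theorem sol_of_lt_one {t : ℝ} (ht : t < 1) : sol t = Real.exp t := by
  simp [sol, piece, term, Nat.floor_eq_zero.2 ht]

theorem integrableOn_sol_Ioc (n : ℕ) : IntegrableOn sol (Ioc (n : ℝ) (n + 1)) := by
  rw [integrableOn_Ioc_iff_integrableOn_Ioo]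
  exact ((continuous_piece n).integrableOn_Icc.mono_set Ioo_subset_Icc_self).congr_fun
    (fun t ht => (sol_eq_piece (Ioo_subset_Ico_self ht)).symm) measurableSet_Ioo

theorem intervalIntegrable_sol {n : ℕ} {x y : ℝ} (hx : n ≤ x) (hxy : x ≤ y)
    (hy : y ≤ n + 1) :
    IntervalIntegrable sol volume x y := by
  rw [intervalIntegrable_iff_integrableOn_Ioc_of_le hxy]
  exact (integrableOn_sol_Ioc n).mono_set (Ioc_subset_Ioc hx hy)

theorem integral_sol {n : ℕ} {x y : ℝ} (hx : n ≤ x) (hxy : x ≤ y) (hy : y ≤ n + 1) :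
    ∫ u in x..y, sol u = antideriv n y - antideriv n x := by
  refine intervalIntegral.integral_eq_sub_of_hasDerivAt_of_le hxy
    (continuous_antideriv n).continuousOn (fun t ht => ?_) (intervalIntegrable_sol hx hxy hy)
  rw [sol_eq_piece ⟨hx.trans ht.1.le, ht.2.trans_le hy⟩]
  exact hasDerivAt_antideriv n t

theorem sol_eq_integral {t : ℝ} (ht : 1 ≤ t) : sol t = ∫ u in (t - 1)..t, sol u := by
  obtain ⟨n, hn⟩ : ∃ n : ℕ, ⌊t⌋₊ = n + 1 :=
    Nat.exists_eq_add_of_le' ((Nat.one_le_floor_iff t).2 ht)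
  have hnt : (n : ℝ) + 1 ≤ t := by exact_mod_cast hn ▸ Nat.floor_le (by linarith)
  have htn : t < (n : ℝ) + 1 + 1 := by exact_mod_cast hn ▸ Nat.lt_floor_add_one t
  have hsucc : ((n + 1 : ℕ) : ℝ) = n + 1 := Nat.cast_succ n
  have hsol : sol t = piece (n + 1) t := sol_eq_piece (by rw [hsucc]; exact ⟨hnt, htn⟩)
  have hpast : ∫ u in (t - 1)..(n + 1), sol u = antideriv n (n + 1) - antideriv n (t - 1) :=
    integral_sol (by linarith) (by linarith) le_rfl
  have hnow :
      ∫ u in (n + 1 : ℝ)..t, sol u = antideriv (n + 1) t - antideriv (n + 1) (n + 1) := by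
    simpa using integral_sol (n := n + 1) hsucc.le (by linarith) (by rw [hsucc]; exact htn.le)
  rw [← intervalIntegral.integral_add_adjacent_intervals
      (intervalIntegrable_sol (n := n) (by linarith) (by linarith) le_rfl)
      (intervalIntegrable_sol (n := n + 1) hsucc.le hnt (by rw [hsucc]; exact htn.le)),
    hpast, hnow, hsol, piece_succ, antideriv_succ_natCast_succ]
  ring

theorem sol_nonneg {t : ℝ} (ht : 0 ≤ t) : 0 ≤ sol t :=
  comparison (f := 0) (fun _ => integrableOn_zero) integrableOn_sol_Ioc
    (fun s hs => by rw [sol_of_lt_one hs.2]; exact (Real.exp_pos s).le) (fun _ _ => by simp)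
    (fun _ hs => (sol_eq_integral hs).ge) t ht

theorem sol_le_exp_one {t : ℝ} (ht : 0 ≤ t) : sol t ≤ Real.exp 1 :=
  comparison (g := fun _ => Real.exp 1) integrableOn_sol_Ioc
    (fun _ => integrableOn_const (by simp))
    (fun s hs => by rw [sol_of_lt_one hs.2]; exact Real.exp_le_exp.2 hs.2.le)
    (fun _ hs => (sol_eq_integral hs).le) (fun _ _ => by simp) t ht

end DelayEquation

/-- There exists a unique bounded function `q : [0,∞) → [0,∞)` such that `q t = e^t`
for `0 ≤ t < 1` and `q t = ∫_{t-1}^t q u du` for `t ≥ 1`. -/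
theorem stmt0 :
    ∃ q : ℝ → ℝ,
      ((∀ t, 0 ≤ t → 0 ≤ q t) ∧ (∃ C : ℝ, ∀ t, 0 ≤ t → q t ≤ C) ∧
        (∀ t, 0 ≤ t → t < 1 → q t = Real.exp t) ∧
        (∀ t, 1 ≤ t → q t = ∫ u in (t - 1)..t, q u)) ∧
      (∀ q' : ℝ → ℝ,
        ((∀ t, 0 ≤ t → 0 ≤ q' t) ∧ (∃ C : ℝ, ∀ t, 0 ≤ t → q' t ≤ C) ∧
          (∀ t, 0 ≤ t → t < 1 → q' t = Real.exp t) ∧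
          (∀ t, 1 ≤ t → q' t = ∫ u in (t - 1)..t, q' u)) →
        ∀ t, 0 ≤ t → q' t = q t) := by
  open DelayEquation in
  refine ⟨sol, ⟨fun t => sol_nonneg, ⟨Real.exp 1, fun t => sol_le_exp_one⟩,
    fun t _ => sol_of_lt_one, fun t => sol_eq_integral⟩, ?_⟩
  rintro q ⟨h0, ⟨C, hC⟩, hexp, heq⟩ t ht
  have hq := integrableOn_Ioc_of_bounded_solution h0 hC hexp heq
  have hbase (s : ℝ) (hs : s ∈ Ico (0 : ℝ) 1) : q s = sol s :=
    (hexp s hs.1 hs.2).trans (sol_of_lt_one hs.2).symm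
  exact le_antisymm
    (comparison hq integrableOn_sol_Ioc (fun s hs => (hbase s hs).le)
      (fun s hs => (heq s hs).le) (fun s hs => (sol_eq_integral hs).ge) t ht)
    (comparison integrableOn_sol_Ioc hq (fun s hs => (hbase s hs).ge)
      (fun s hs => (sol_eq_integral hs).le) (fun s hs => (heq s hs).ge) t ht)
end

section
/- If q : [0,∞) → [0,∞) is bounded, right continuous, satisfies q(t) = e^t for 0 ≤ t < 1 and q(t) = ∫_{t-1}^t q(u) du for t ≥ 1, then 1 ≤ q(t) ≤ e for all t ≥ 0. -/
/-!
The equation `q t = ∫_{t-1}^t q` is linear, so the lower bound for `q` is the upper bound for `-q`,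
and it suffices to show that an upper bound `c` of a bounded solution on `[0, 1)` persists. This is
done half a unit at a time: if `q ≤ c` on `[T - 1, T)`, then for `t ∈ [T, T + 1/2]` at most half of
the window `[t - 1, t]` lies in `[T, T + 1/2]`, so the excess of `q` over `c` on that interval is at
most half of itself, hence zero since it is finite. Right continuity only serves to make `q`
measurable, as the pointwise limit of `t ↦ q (⌈n t⌉ / n)`.
-/

open MeasureTheory Set Filter Topology

theorem tendsto_ceil_mul_div_nhdsGE (t : ℝ) :
    Tendsto (fun n : ℕ => (⌈t * (n + 1)⌉ : ℝ) / (n + 1)) atTop (𝓝[≥] t) := by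
  have hpos (n : ℕ) : (0 : ℝ) < n + 1 := by positivity
  have hge (n : ℕ) : t ≤ (⌈t * (n + 1)⌉ : ℝ) / (n + 1) :=
    (le_div_iff₀ (hpos n)).2 (Int.le_ceil _)
  have hle (n : ℕ) : (⌈t * (n + 1)⌉ : ℝ) / (n + 1) ≤ t + 1 / (n + 1) := by
    rw [div_le_iff₀ (hpos n), add_mul, one_div_mul_cancel (hpos n).ne']
    exact (Int.ceil_lt_add_one _).le
  have hupper : Tendsto (fun n : ℕ => t + 1 / ((n : ℝ) + 1)) atTop (𝓝 t) := by
    simpa using tendsto_const_nhds.add (tendsto_one_div_add_atTop_nhds_zero_nat (𝕜 := ℝ))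
  exact tendsto_nhdsWithin_of_tendsto_nhds_of_eventually_within _
    (tendsto_of_tendsto_of_tendsto_of_le_of_le tendsto_const_nhds hupper hge hle)
    (Eventually.of_forall hge)

theorem aemeasurable_restrict_of_continuousWithinAt_Ici {β : Type*} [TopologicalSpace β]
    [TopologicalSpace.PseudoMetrizableSpace β] [MeasurableSpace β] [BorelSpace β]
    {f : ℝ → β} {s : Set ℝ}
    (μ : Measure ℝ) (hs : MeasurableSet s) (hf : ∀ t ∈ s, ContinuousWithinAt f (Ici t) t) :
    AEMeasurable f (μ.restrict s) := by
  refine aemeasurable_of_tendsto_metrizable_ae atTop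
    (f := fun (n : ℕ) (t : ℝ) => f ((⌈t * (n + 1)⌉ : ℝ) / (n + 1))) (fun n => ?_) ?_
  · exact ((measurable_from_top (f := fun k : ℤ => f (k / (n + 1)))).comp
      (Int.measurable_ceil.comp (measurable_id.mul_const _))).aemeasurable
  · filter_upwards [ae_restrict_mem hs] with t ht
    exact (hf t ht).tendsto.comp (tendsto_ceil_mul_div_nhdsGE t)

theorem intervalIntegrable_of_forall_integrableOn_Icc_zero {f : ℝ → ℝ}
    (hint : ∀ b, IntegrableOn f (Icc 0 b)) {a b : ℝ} (ha : 0 ≤ a) (hab : a ≤ b) :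
    IntervalIntegrable f volume a b :=
  (intervalIntegrable_iff_integrableOn_Icc_of_le hab).2 ((hint b).mono_set (Icc_subset_Icc_left ha))

def IsMovingAverage (f : ℝ → ℝ) : Prop :=
  ∀ t, 1 ≤ t → f t = ∫ u in (t - 1)..t, f u

namespace IsMovingAverage

variable {f : ℝ → ℝ}

theorem neg (hf : IsMovingAverage f) : IsMovingAverage (-f) := fun t ht => by
  simp only [Pi.neg_apply, intervalIntegral.integral_neg, hf t ht]

variable (hf : IsMovingAverage f) (hint : ∀ b, IntegrableOn f (Icc 0 b))
include hf hint

theorem le_add_half {T c d : ℝ} (hT : 1 ≤ T) (hpast : ∀ x ∈ Ico (T - 1) T, f x ≤ c)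
    (hnow : ∀ x ∈ Icc T (T + 1 / 2), f x ≤ c + d) (hd : 0 ≤ d) :
    ∀ t ∈ Icc T (T + 1 / 2), f t ≤ c + d / 2 := by
  rintro t ⟨hTt, htT⟩
  have hwindow : f t = (∫ u in (t - 1)..T, f u) + ∫ u in T..t, f u := by
    rw [hf t (hT.trans hTt), intervalIntegral.integral_add_adjacent_intervals
      (intervalIntegrable_of_forall_integrableOn_Icc_zero hint (by linarith) (by linarith))
      (intervalIntegrable_of_forall_integrableOn_Icc_zero hint (by linarith) hTt)]
  have hold : (∫ u in (t - 1)..T, f u) ≤ c * (T - (t - 1)) :=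
    calc (∫ u in (t - 1)..T, f u) ≤ ∫ _ in (t - 1)..T, c :=
          intervalIntegral.integral_mono_on_of_le_Ioo (by linarith)
            (intervalIntegrable_of_forall_integrableOn_Icc_zero hint (by linarith) (by linarith))
            intervalIntegrable_const fun x hx => hpast x ⟨by linarith [hx.1], hx.2⟩
      _ = c * (T - (t - 1)) := by rw [intervalIntegral.integral_const, smul_eq_mul, mul_comm]
  have hnew : (∫ u in T..t, f u) ≤ (c + d) * (t - T) :=
    calc (∫ u in T..t, f u) ≤ ∫ _ in T..t, c + d :=
          intervalIntegral.integral_mono_on hTt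
            (intervalIntegrable_of_forall_integrableOn_Icc_zero hint (by linarith) hTt)
            intervalIntegrable_const fun x hx => hnow x ⟨hx.1, hx.2.trans htT⟩
      _ = (c + d) * (t - T) := by rw [intervalIntegral.integral_const, smul_eq_mul, mul_comm]
  nlinarith

theorem le_on_Icc_of_le_on_Ico {T c C : ℝ} (hT : 1 ≤ T) (hpast : ∀ x ∈ Ico (T - 1) T, f x ≤ c)
    (hbdd : ∀ x ∈ Icc T (T + 1 / 2), f x ≤ C) :
    ∀ t ∈ Icc T (T + 1 / 2), f t ≤ c := by
  set d := max (C - c) 0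
  have hgeom (m : ℕ) : ∀ t ∈ Icc T (T + 1 / 2), f t ≤ c + d / 2 ^ m := by
    induction m with
    | zero => simpa using fun t ht => (hbdd t ht).trans (by linarith [le_max_left (C - c) 0])
    | succ m ih =>
      rw [pow_succ, ← div_div]
      exact hf.le_add_half hint hT hpast ih (by positivity)
  intro t ht
  have hlim : Tendsto (fun m : ℕ => c + d / 2 ^ m) atTop (𝓝 c) := by
    simpa using tendsto_const_nhds.add
      (tendsto_const_nhds.div_atTop (tendsto_pow_atTop_atTop_of_one_lt (one_lt_two (α := ℝ))))
  exact ge_of_tendsto' hlim fun m => hgeom m t ht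

theorem le_of_forall_Ico_zero_one_le {c C : ℝ} (hbdd : ∀ t, 0 ≤ t → f t ≤ C)
    (hinit : ∀ t ∈ Ico 0 1, f t ≤ c) : ∀ t, 0 ≤ t → f t ≤ c := by
  have hstep (n : ℕ) : ∀ t ∈ Ico 0 (1 + n / 2 : ℝ), f t ≤ c := by
    induction n with
    | zero => simpa using hinit
    | succ n ih =>
      rintro t ⟨ht0, htn⟩
      have hT : (1 : ℝ) ≤ 1 + n / 2 := le_add_of_nonneg_right (by positivity)
      rcases lt_or_ge t (1 + n / 2) with hlt | hge
      · exact ih t ⟨ht0, hlt⟩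
      · refine hf.le_on_Icc_of_le_on_Ico hint hT (fun x hx => ih x ⟨by linarith [hx.1], hx.2⟩)
          (fun x hx => hbdd x (by linarith [hx.1])) t ⟨hge, ?_⟩
        push_cast at htn
        linarith
  intro t ht
  refine hstep ⌈2 * t⌉₊ t ⟨ht, ?_⟩
  linarith [Nat.le_ceil (2 * t)]

end IsMovingAverage

/-- If `q : [0,∞) → [0,∞)` is bounded, right continuous, satisfies `q t = e^t` on `[0,1)`
and `q t = ∫_{t-1}^t q u du` for `t ≥ 1`, then `1 ≤ q t ≤ e` for all `t ≥ 0`. -/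
theorem stmt1 (q : ℝ → ℝ)
    (hnonneg : ∀ t, 0 ≤ t → 0 ≤ q t)
    (hbdd : ∃ C : ℝ, ∀ t, 0 ≤ t → q t ≤ C)
    (hrc : ∀ t, 0 ≤ t → ContinuousWithinAt q (Set.Ici t) t)
    (heq1 : ∀ t, 0 ≤ t → t < 1 → q t = Real.exp t)
    (heq2 : ∀ t, 1 ≤ t → q t = ∫ u in (t - 1)..t, q u) :
    ∀ t, 0 ≤ t → 1 ≤ q t ∧ q t ≤ Real.exp 1 := by
  obtain ⟨C, hC⟩ := hbdd
  have hq : IsMovingAverage q := heq2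
  have hint (b : ℝ) : IntegrableOn q (Icc 0 b) := by
    refine .of_bound measure_Icc_lt_top (aemeasurable_restrict_of_continuousWithinAt_Ici
      volume measurableSet_Icc fun t ht => hrc t ht.1).aestronglyMeasurable C ?_
    filter_upwards [ae_restrict_mem measurableSet_Icc] with x hx
    rw [Real.norm_of_nonneg (hnonneg x hx.1)]
    exact hC x hx.1
  have hupper := hq.le_of_forall_Ico_zero_one_le hint hC fun t ht => by
    rw [heq1 t ht.1 ht.2]
    exact Real.exp_le_exp.2 ht.2.le
  have hlower := hq.neg.le_of_forall_Ico_zero_one_le (fun b => (hint b).neg) (C := 0)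
    (fun t ht => neg_nonpos.2 (hnonneg t ht)) (c := -1) fun t ht => by
      simpa [heq1 t ht.1 ht.2] using Real.one_le_exp ht.1
  exact fun t ht => ⟨by simpa using hlower t ht, hupper t ht⟩
end

section
/- The unique bounded solution q of the renewal-type equation satisfies lim_{t→∞} q(t) = 2. -/
/-!
For `t ≥ 1` the weighted mass `∫_{t-1}^t (u - (t-1)) q(u) du` has right derivative
`q(t) - ∫_{t-1}^t q = 0`, so it keeps its value `∫_0^1 u eᵘ du = 1` from `t = 1`. Together with the
equation this gives `q(t) - 2 = ∫_{t-1}^t (1 - 2(u - (t-1))) (q(u) - 2) du`, and as the kernel has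
`L¹`-norm `1/2`, the bound on `|q - 2|` halves with every unit of time.

Since `q` is not assumed measurable, local integrability on `[0, ∞)` comes first: at the first point
where it would fail, the windows just beyond are not integrable, so `q` vanishes there.
-/

open MeasureTheory Set Filter Topology

section Primitive

variable {f : ℝ → ℝ}

theorem intervalIntegrable_of_integrableOn_Icc_zero (hf : ∀ s, IntegrableOn f (Icc 0 s))
    {a b : ℝ} (ha : 0 ≤ a) (hb : 0 ≤ b) : IntervalIntegrable f volume a b :=
  ((hf (max a b)).mono_set
    (uIcc_subset_Icc ⟨ha, le_max_left a b⟩ ⟨hb, le_max_right a b⟩)).intervalIntegrable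

theorem continuousOn_primitive_Ici_zero (hf : ∀ s, IntegrableOn f (Icc 0 s)) :
    ContinuousOn (fun x => ∫ u in (0 : ℝ)..x, f u) (Ici 0) := by
  intro x hx
  have hcont := intervalIntegral.continuousOn_primitive_interval'
    (intervalIntegrable_of_integrableOn_Icc_zero hf le_rfl (by linarith [mem_Ici.1 hx] :
      (0 : ℝ) ≤ x + 1)) left_mem_uIcc
  rw [uIcc_of_le (by linarith [mem_Ici.1 hx])] at hcont
  refine (hcont x ⟨hx, by linarith⟩).mono_of_mem_nhdsWithin ?_
  rw [← Ici_inter_Iic]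
  exact inter_mem_nhdsWithin _ (Iic_mem_nhds (by linarith))

theorem hasDerivWithinAt_primitive_Ici (hf : ∀ s, IntegrableOn f (Icc 0 s)) {b : ℝ}
    (hb : 0 ≤ b) (hfb : ContinuousWithinAt f (Ici b) b) :
    HasDerivWithinAt (fun x => ∫ u in (0 : ℝ)..x, f u) (f b) (Ici b) b := by
  have hmeas : StronglyMeasurableAtFilter f (𝓝[>] b) :=
    ⟨Ioo b (b + 1), Ioo_mem_nhdsGT (lt_add_one b),
      ((hf (b + 1)).mono_set fun x hx => ⟨hb.trans hx.1.le, hx.2.le⟩).aestronglyMeasurable⟩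
  exact intervalIntegral.integral_hasDerivWithinAt_right
    (intervalIntegrable_of_integrableOn_Icc_zero hf le_rfl hb) hmeas
    (hfb.mono Ioi_subset_Ici_self)

theorem integral_window_eq_sub (hf : ∀ s, IntegrableOn f (Icc 0 s)) {t : ℝ} (ht : 1 ≤ t) :
    ∫ u in (t - 1)..t, f u = (∫ u in (0 : ℝ)..t, f u) - ∫ u in (0 : ℝ)..(t - 1), f u :=
  (intervalIntegral.integral_interval_sub_left
    (intervalIntegrable_of_integrableOn_Icc_zero hf le_rfl (by linarith))
    (intervalIntegrable_of_integrableOn_Icc_zero hf le_rfl (by linarith))).symm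

theorem continuousOn_integral_window (hf : ∀ s, IntegrableOn f (Icc 0 s)) :
    ContinuousOn (fun t => ∫ u in (t - 1)..t, f u) (Ici 1) := by
  have hF := continuousOn_primitive_Ici_zero hf
  have hmaps : MapsTo (fun t : ℝ => t - 1) (Ici 1) (Ici 0) := fun t ht => by
    simp only [mem_Ici] at ht ⊢; linarith
  exact ((hF.mono (Ici_subset_Ici.2 zero_le_one)).sub
    (hF.comp (continuous_sub_right 1).continuousOn hmaps)).congr
    fun t ht => integral_window_eq_sub hf ht

theorem hasDerivWithinAt_integral_window (hf : ∀ s, IntegrableOn f (Icc 0 s)) {t : ℝ}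
    (ht : 1 ≤ t) (hft : ContinuousWithinAt f (Ici t) t)
    (hft' : ContinuousWithinAt f (Ici (t - 1)) (t - 1)) :
    HasDerivWithinAt (fun s => ∫ u in (s - 1)..s, f u) (f t - f (t - 1)) (Ici t) t := by
  have hshift : HasDerivWithinAt (fun s : ℝ => s - 1) 1 (Ici t) t :=
    (hasDerivWithinAt_id t _).sub_const 1
  have hmaps : MapsTo (fun s : ℝ => s - 1) (Ici t) (Ici (t - 1)) := fun s hs => by
    simp only [mem_Ici] at hs ⊢; linarith
  have h := (hasDerivWithinAt_primitive_Ici hf (by linarith) hft).sub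
    (((hasDerivWithinAt_primitive_Ici hf (by linarith) hft').scomp t hshift hmaps))
  simp only [one_smul] at h
  exact h.congr (fun s hs => integral_window_eq_sub hf (ht.trans hs)) (integral_window_eq_sub hf ht)

end Primitive

theorem integrableOn_Icc_of_forall_lt {f : ℝ → ℝ} {a b C : ℝ} (hC : ∀ x ∈ Ico a b, ‖f x‖ ≤ C)
    (hf : ∀ s < b, IntegrableOn f (Icc a s)) : IntegrableOn f (Icc a b) := by
  have hcover : Ico a b ⊆ ⋃ n : ℕ, Icc a (b - 1 / (n + 1)) := fun x hx => by
    obtain ⟨n, hn⟩ := exists_nat_one_div_lt (sub_pos.2 hx.2)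
    exact mem_iUnion.2 ⟨n, hx.1, by linarith⟩
  have hmeas : AEStronglyMeasurable f (volume.restrict (Ico a b)) := by
    refine AEStronglyMeasurable.mono_set hcover (aestronglyMeasurable_iUnion_iff.2 fun n => ?_)
    exact (hf _ (sub_lt_self b (by positivity))).aestronglyMeasurable
  refine (integrableOn_Icc_iff_integrableOn_Ico (f := f)).2 ⟨hmeas, .of_bounded (C := C) ?_⟩
  exact (ae_restrict_iff' measurableSet_Ico).2 (ae_of_all _ hC)

theorem integral_abs_one_sub_two_mul : ∫ v in (0 : ℝ)..1, |1 - 2 * v| = 1 / 2 := by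
  have hc : Continuous fun v : ℝ => |1 - 2 * v| := by fun_prop
  rw [← intervalIntegral.integral_add_adjacent_intervals (b := 1 / 2) (hc.intervalIntegrable _ _)
    (hc.intervalIntegrable _ _)]
  have hleft : ∫ v in (0 : ℝ)..1 / 2, |1 - 2 * v| = ∫ v in (0 : ℝ)..1 / 2, (1 - 2 * v) := by
    refine intervalIntegral.integral_congr fun v hv => abs_of_nonneg ?_
    rw [uIcc_of_le (by norm_num)] at hv
    linarith [hv.2]
  have hright : ∫ v in (1 / 2 : ℝ)..1, |1 - 2 * v| = ∫ v in (1 / 2 : ℝ)..1, (2 * v - 1) := by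
    refine intervalIntegral.integral_congr fun v hv => ?_
    rw [uIcc_of_le (by norm_num)] at hv
    rw [abs_of_nonpos (by linarith [hv.1])]
    ring
  rw [hleft, hright, intervalIntegral.integral_sub, intervalIntegral.integral_sub,
    intervalIntegral.integral_const_mul, intervalIntegral.integral_const_mul, integral_id]
  all_goals first | exact (continuous_const_mul 2).intervalIntegrable _ _ | norm_num

theorem abs_integral_window_kernel_mul_le {g : ℝ → ℝ} {t M : ℝ}
    (hg : ∀ u ∈ Icc (t - 1) t, |g u| ≤ M) :
    |∫ u in (t - 1)..t, (1 - 2 * (u - (t - 1))) * g u| ≤ M / 2 := by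
  have hk : Continuous fun u : ℝ => |1 - 2 * (u - (t - 1))| := by fun_prop
  calc |∫ u in (t - 1)..t, (1 - 2 * (u - (t - 1))) * g u|
      ≤ ∫ u in (t - 1)..t, |1 - 2 * (u - (t - 1))| * M := by
        refine intervalIntegral.norm_integral_le_of_norm_le
          (f := fun u => (1 - 2 * (u - (t - 1))) * g u) (sub_le_self t zero_le_one)
          (ae_of_all _ fun u hu => ?_)
          ((hk.mul continuous_const).intervalIntegrable (μ := volume) _ _)
        rw [Real.norm_eq_abs, abs_mul]
        exact mul_le_mul_of_nonneg_left (hg u (Ioc_subset_Icc_self hu)) (abs_nonneg _)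
    _ = M / 2 := by
        rw [intervalIntegral.integral_mul_const,
          intervalIntegral.integral_comp_sub_right (fun v => |1 - 2 * v|), sub_self,
          sub_sub_cancel, integral_abs_one_sub_two_mul]
        ring

theorem integral_window_kernel_mul_sub_two {g : ℝ → ℝ} {t : ℝ}
    (hg : IntervalIntegrable g volume (t - 1) t)
    (hmoment : ∫ u in (t - 1)..t, (u - (t - 1)) * g u = 1) :
    ∫ u in (t - 1)..t, (1 - 2 * (u - (t - 1))) * (g u - 2) = (∫ u in (t - 1)..t, g u) - 2 := by
  have hexpand : ∀ u, (1 - 2 * (u - (t - 1))) * (g u - 2)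
      = g u - 2 * ((u - (t - 1)) * g u) - 2 * (1 - 2 * (u - (t - 1))) := fun u => by ring
  have hmean : ∫ u in (t - 1)..t, (1 - 2 * (u - (t - 1))) = 0 := by
    rw [intervalIntegral.integral_comp_sub_right (fun v => 1 - 2 * v), sub_self, sub_sub_cancel,
      intervalIntegral.integral_sub intervalIntegrable_const
        ((continuous_const_mul 2).intervalIntegrable _ _), intervalIntegral.integral_const_mul,
      integral_id]
    norm_num
  have hug : IntervalIntegrable (fun u => (u - (t - 1)) * g u) volume (t - 1) t :=
    hg.continuousOn_mul (continuous_sub_right _).continuousOn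
  simp_rw [hexpand]
  rw [intervalIntegral.integral_sub (hg.sub (hug.const_mul 2)) (Continuous.intervalIntegrable
      (by fun_prop) _ _), intervalIntegral.integral_sub hg (hug.const_mul 2),
    intervalIntegral.integral_const_mul, intervalIntegral.integral_const_mul, hmoment, hmean]
  ring

theorem tendsto_zero_of_abs_le_half {e : ℝ → ℝ} {K : ℝ} (hK : ∀ t, 0 ≤ t → |e t| ≤ K)
    (hhalf : ∀ t, 1 ≤ t → ∀ M, (∀ u ∈ Icc (t - 1) t, |e u| ≤ M) → |e t| ≤ M / 2) :
    Tendsto e atTop (𝓝 0) := by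
  have hdecay : ∀ n : ℕ, ∀ t, (n : ℝ) ≤ t → |e t| ≤ K * (1 / 2) ^ n := by
    intro n
    induction n with
    | zero => exact fun t ht => by simpa using hK t (by simpa using ht)
    | succ n ih =>
      intro t ht
      push_cast at ht
      have hn : (0 : ℝ) ≤ n := n.cast_nonneg
      rw [pow_succ, ← mul_assoc, mul_one_div]
      exact hhalf t (by linarith) _ fun u hu => ih u (by linarith [hu.1])
  refine squeeze_zero_norm' (a := fun t => K * (1 / 2) ^ ⌊t⌋₊) ?_ ?_
  · filter_upwards [eventually_ge_atTop 0] with t ht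
    exact hdecay _ t (Nat.floor_le ht)
  · simpa using ((tendsto_pow_atTop_nhds_zero_of_lt_one (by norm_num : (0 : ℝ) ≤ 1 / 2)
      (by norm_num)).comp tendsto_nat_floor_atTop).const_mul K

section Renewal

variable {q : ℝ → ℝ}

theorem integrableOn_Icc_zero_one_of_eq_exp (hexp : ∀ t, 0 ≤ t → t < 1 → q t = Real.exp t) :
    IntegrableOn q (Icc 0 1) :=
  (integrableOn_Icc_iff_integrableOn_Ico (f := q)).2 <|
    (Real.continuous_exp.integrableOn_Icc.mono_set Ico_subset_Icc_self).congr_fun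
      (fun x hx => (hexp x hx.1 hx.2).symm) measurableSet_Ico

theorem integral_mul_eq_one_of_eq_exp (hexp : ∀ t, 0 ≤ t → t < 1 → q t = Real.exp t) :
    ∫ u in (0 : ℝ)..1, u * q u = 1 := by
  calc ∫ u in (0 : ℝ)..1, u * q u = ∫ u in (0 : ℝ)..1, u * Real.exp u := by
        simp only [intervalIntegral.integral_of_le zero_le_one, integral_Ioc_eq_integral_Ioo]
        exact setIntegral_congr_fun measurableSet_Ioo fun u hu => by rw [hexp u hu.1.le hu.2]
    _ = 1 := by
        rw [intervalIntegral.integral_eq_sub_of_hasDerivAt (f := fun u => (u - 1) * Real.exp u)]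
        · simp
        · exact fun x _ => (((hasDerivAt_id x).sub_const 1).mul (Real.hasDerivAt_exp x)).congr_deriv
            (by rw [id]; ring)
        · exact (continuous_id.mul Real.continuous_exp).intervalIntegrable 0 1

theorem integrableOn_Icc_of_eq_integral_window {C : ℝ} (hC : ∀ t, 0 ≤ t → ‖q t‖ ≤ C)
    (h01 : IntegrableOn q (Icc 0 1)) (hwin : ∀ t, 1 ≤ t → q t = ∫ u in (t - 1)..t, q u)
    (s : ℝ) : IntegrableOn q (Icc 0 s) := by
  by_contra hs
  set bad := {s : ℝ | ¬ IntegrableOn q (Icc 0 s)}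
  have hbad_ge : ∀ x ∈ bad, 1 ≤ x := fun x hx =>
    le_of_not_gt fun hx1 => hx (h01.mono_set (Icc_subset_Icc_right hx1.le))
  set T := sInf bad
  have hT : 1 ≤ T := le_csInf ⟨s, hs⟩ hbad_ge
  have hgood : IntegrableOn q (Icc 0 T) :=
    integrableOn_Icc_of_forall_lt (fun x hx => hC x hx.1) fun s' hs' =>
      not_not.1 fun h => (csInf_le ⟨1, hbad_ge⟩ h).not_gt hs'
  have hbad : ∀ t, T < t → ¬ IntegrableOn q (Icc 0 t) := fun t ht h => by
    obtain ⟨x, hx, hxt⟩ := exists_lt_of_csInf_lt ⟨s, hs⟩ ht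
    exact hx (h.mono_set (Icc_subset_Icc_right hxt.le))
  -- to the right of `T` the windows are not integrable, so `q` takes the junk value `0` there
  have hzero : ∀ t ∈ Ioo T (T + 1), q t = 0 := fun t ht => by
    have hwin_bad : ¬ IntervalIntegrable q volume (t - 1) t := fun h => by
      refine hbad t ht.1 ((hgood.union
        ((intervalIntegrable_iff_integrableOn_Icc_of_le (by linarith)).1 h)).mono_set ?_)
      intro x hx
      rcases le_or_gt x T with hxT | hxT
      · exact Or.inl ⟨hx.1, hxT⟩
      · exact Or.inr ⟨by linarith [ht.2], hx.2⟩
    rw [hwin t (by linarith [ht.1]), intervalIntegral.integral_undef hwin_bad]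
  refine hbad (T + 1 / 2) (by linarith) ((hgood.union (integrableOn_zero.congr_fun
    (fun x hx => (hzero x hx).symm) measurableSet_Ioo)).mono_set ?_)
  intro x hx
  rcases le_or_gt x T with hxT | hxT
  · exact Or.inl ⟨hx.1, hxT⟩
  · exact Or.inr ⟨hxT, by linarith [hx.2]⟩

theorem continuousWithinAt_Ici_of_renewal (hint : ∀ s, IntegrableOn q (Icc 0 s))
    (hexp : ∀ t, 0 ≤ t → t < 1 → q t = Real.exp t)
    (hwin : ∀ t, 1 ≤ t → q t = ∫ u in (t - 1)..t, q u) {t : ℝ} (ht : 0 ≤ t) :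
    ContinuousWithinAt q (Ici t) t := by
  rcases lt_or_ge t 1 with ht1 | ht1
  · refine Real.continuous_exp.continuousWithinAt.congr_of_eventuallyEq ?_ (hexp t ht ht1)
    filter_upwards [inter_mem_nhdsWithin (Ici t) (Iio_mem_nhds ht1)] with x hx
    exact hexp x (ht.trans hx.1) hx.2
  · have hq : ContinuousOn q (Ici 1) := (continuousOn_integral_window hint).congr hwin
    exact (hq t ht1).mono (Ici_subset_Ici.2 ht1)

theorem integral_window_moment_eq (hint : ∀ s, IntegrableOn q (Icc 0 s))
    (hright : ∀ t, 0 ≤ t → ContinuousWithinAt q (Ici t) t)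
    (hwin : ∀ t, 1 ≤ t → q t = ∫ u in (t - 1)..t, q u) {t : ℝ} (ht : 1 ≤ t) :
    ∫ u in (t - 1)..t, (u - (t - 1)) * q u = ∫ u in (0 : ℝ)..1, u * q u := by
  have hint' : ∀ s, IntegrableOn (fun u => u * q u) (Icc 0 s) := fun s =>
    (hint s).continuousOn_mul continuousOn_id isCompact_Icc
  set P : ℝ → ℝ := fun s => (∫ u in (s - 1)..s, u * q u) - (s - 1) * ∫ u in (s - 1)..s, q u
  -- the `q (s - 1)` terms of the two window derivatives cancel, leaving `q s - ∫ q = 0`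
  have hderiv : ∀ s ∈ Ico 1 t, HasDerivWithinAt P 0 (Ici s) s := fun s hs => by
    have hs0 : 0 ≤ s - 1 := by linarith [hs.1]
    have h := (hasDerivWithinAt_integral_window hint' hs.1
      (continuousWithinAt_id.mul (hright s (by linarith))) (continuousWithinAt_id.mul
        (hright (s - 1) hs0))).sub (((hasDerivWithinAt_id s _).sub_const 1).mul
      (hasDerivWithinAt_integral_window hint hs.1 (hright s (by linarith)) (hright (s - 1) hs0)))
    refine h.congr_deriv ?_
    rw [id, ← hwin s hs.1]
    ring
  have hcont : ContinuousOn P (Icc 1 t) :=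
    (((continuousOn_integral_window hint').sub ((continuous_sub_right 1).continuousOn.mul
      (continuousOn_integral_window hint))).mono Icc_subset_Ici_self)
  have hconst := constant_of_has_deriv_right_zero hcont hderiv t ⟨ht, le_rfl⟩
  have hiq := intervalIntegrable_of_integrableOn_Icc_zero hint (by linarith : (0 : ℝ) ≤ t - 1)
    (by linarith : (0 : ℝ) ≤ t)
  have hiuq := intervalIntegrable_of_integrableOn_Icc_zero hint' (by linarith : (0 : ℝ) ≤ t - 1)
    (by linarith : (0 : ℝ) ≤ t)
  simp only [P, sub_self, zero_mul, sub_zero] at hconst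
  rw [← hconst, ← intervalIntegral.integral_const_mul, ← intervalIntegral.integral_sub hiuq
    (hiq.const_mul _)]
  congr 1
  ext u
  ring

end Renewal

/-- The unique bounded solution `q` of the renewal-type equation satisfies
`lim_{t→∞} q t = 2`. -/
theorem stmt2 (q : ℝ → ℝ)
    (hnonneg : ∀ t, 0 ≤ t → 0 ≤ q t)
    (hbdd : ∃ C : ℝ, ∀ t, 0 ≤ t → q t ≤ C)
    (heq1 : ∀ t, 0 ≤ t → t < 1 → q t = Real.exp t)
    (heq2 : ∀ t, 1 ≤ t → q t = ∫ u in (t - 1)..t, q u) :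
    Filter.Tendsto q Filter.atTop (nhds 2) := by
  obtain ⟨C, hC⟩ := hbdd
  have hint : ∀ s, IntegrableOn q (Icc 0 s) :=
    integrableOn_Icc_of_eq_integral_window
      (fun t ht => (Real.norm_of_nonneg (hnonneg t ht)).trans_le (hC t ht))
      (integrableOn_Icc_zero_one_of_eq_exp heq1) heq2
  have hmoment : ∀ t, 1 ≤ t → ∫ u in (t - 1)..t, (u - (t - 1)) * q u = 1 := fun t ht => by
    rw [integral_window_moment_eq hint
      (fun s hs => continuousWithinAt_Ici_of_renewal hint heq1 heq2 hs) heq2 ht,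
      integral_mul_eq_one_of_eq_exp heq1]
  have hkernel : ∀ t, 1 ≤ t →
      q t - 2 = ∫ u in (t - 1)..t, (1 - 2 * (u - (t - 1))) * (q u - 2) := fun t ht => by
    rw [integral_window_kernel_mul_sub_two (intervalIntegrable_of_integrableOn_Icc_zero hint
      (by linarith) (by linarith)) (hmoment t ht), ← heq2 t ht]
  have hlim : Tendsto (fun t => q t - 2) atTop (𝓝 0) :=
    tendsto_zero_of_abs_le_half (K := C + 2)
      (fun t ht => abs_sub_le_iff.2 ⟨by linarith [hC t ht], by linarith [hC t ht, hnonneg t ht]⟩)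
      fun t ht M hM => hkernel t ht ▸ abs_integral_window_kernel_mul_le hM
  simpa using hlim.add_const 2
end

section
/- Let 0 < η < 1 and T > 1. Suppose r : [0,T] → ℝ is right continuous, (1−η)e^{(1−η)t} < r(t) < (1+η)e^{(1+η)t} for 0 ≤ t < 1, and (1−η)∫_{t-1}^t r(u) du < r(t) < (1+η)∫_{t-1}^t r(u) du for 1 ≤ t ≤ T. Then sup_{t∈[0,T]} |r(t) − q(t)| ≤ 4η e^{(1+η)T}, where q is the unique bounded solution of the renewal equation. -/
/-!
Write `B t = 4 η e^{(1+η) t}`. Right continuity of `r` and `q` lets one argue at a first point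
`c` where `|r - q| < B` fails. For `c < 1` this contradicts an elementary estimate on
exponentials. For `c ≥ 1`, integrating `|r - q| < B` over `[c-1, c)` and inserting it into the
renewal inequalities for `r` and the renewal equation for `q` gives
`|r c - q c| < η q c + (1 + η) ∫_{c-1}^c B`, which is at most `B c` because
`q c ≤ e^c ≤ 4 e^{(1+η)(c-1)}`. This needs `q` to be locally integrable (otherwise the renewal
equation only speaks about a junk integral), continuous on `[1, T]` and bounded by `e^t`.
-/

open MeasureTheory Set Filter Real

theorem lt_on_Icc_of_forall_Ico {f g : ℝ → ℝ} {a b : ℝ}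
    (hf : ∀ c ∈ Icc a b, ContinuousWithinAt f (Icc c b) c)
    (hg : ∀ c ∈ Icc a b, ContinuousWithinAt g (Icc c b) c)
    (hstep : ∀ c ∈ Icc a b, (∀ x ∈ Ico a c, f x < g x) → f c < g c) :
    ∀ x ∈ Icc a b, f x < g x := by
  by_contra! ⟨x₀, hx₀, hgf⟩
  set S := {x ∈ Icc a b | g x ≤ f x}
  have hSne : S.Nonempty := ⟨x₀, hx₀, hgf⟩
  have hSbdd : BddBelow S := ⟨a, fun x hx => hx.1.1⟩
  set c := sInf S
  have hc : c ∈ Icc a b :=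
    ⟨le_csInf hSne fun x hx => hx.1.1, (csInf_le hSbdd ⟨hx₀, hgf⟩).trans hx₀.2⟩
  have hfc : f c < g c := hstep c hc fun x hx => by
    by_contra! hx'
    exact (csInf_le hSbdd ⟨⟨hx.1, hx.2.le.trans hc.2⟩, hx'⟩).not_gt hx.2
  obtain ⟨ε, hε, hball⟩ := Metric.mem_nhdsWithin_iff.1 ((hf c hc).eventually_lt (hg c hc) hfc)
  obtain ⟨x, hxS, hxc⟩ := exists_lt_of_csInf_lt hSne (lt_add_of_pos_right c hε)
  have hcx : c ≤ x := csInf_le hSbdd hxS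
  have hdist : dist x c < ε := by rw [Real.dist_eq, abs_of_nonneg (by linarith)]; linarith
  exact hxS.2.not_gt (hball ⟨hdist, hcx, hxS.1.2⟩)

theorem integrableOn_Ico_of_forall_lt {E : Type*} [NormedAddCommGroup E] {f : ℝ → E}
    {a b C : ℝ} (hbdd : ∀ x ∈ Ico a b, ‖f x‖ ≤ C) (hint : ∀ c < b, IntegrableOn f (Icc a c)) :
    IntegrableOn f (Ico a b) := by
  have hunion : Ico a b = ⋃ n : ℕ, Icc a (b - 1 / (n + 1)) := by
    ext x
    simp only [mem_Ico, mem_iUnion, mem_Icc]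
    constructor
    · rintro ⟨hax, hxb⟩
      obtain ⟨n, hn⟩ := exists_nat_one_div_lt (sub_pos.2 hxb)
      exact ⟨n, hax, by linarith⟩
    · rintro ⟨n, hax, hxb⟩
      exact ⟨hax, hxb.trans_lt (sub_lt_self b Nat.one_div_pos_of_nat)⟩
  have hmeas : AEStronglyMeasurable f (volume.restrict (Ico a b)) := by
    rw [hunion, aestronglyMeasurable_iUnion_iff]
    exact fun n => (hint _ (sub_lt_self b Nat.one_div_pos_of_nat)).aestronglyMeasurable
  exact ⟨hmeas, .restrict_of_bounded C measure_Ico_lt_top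
    ((ae_restrict_iff' measurableSet_Ico).2 (Eventually.of_forall hbdd))⟩

theorem mul_integral_exp_mul {k : ℝ} (hk : k ≠ 0) (a b : ℝ) :
    k * ∫ x in a..b, exp (k * x) = exp (k * b) - exp (k * a) := by
  rw [intervalIntegral.integral_comp_mul_left (fun x => exp x) hk, integral_exp,
    smul_eq_mul, mul_inv_cancel_left₀ hk]

section Renewal

variable {E : Type*} [NormedAddCommGroup E] {q : ℝ → E}

theorem intervalIntegrable_sub_one_of_integrableOn_Icc {b c : ℝ}
    (hint : IntegrableOn q (Icc 0 b)) (hc : c ∈ Icc 1 b) : IntervalIntegrable q volume (c - 1) c :=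
  (hint.mono_set (uIcc_subset_Icc ⟨by linarith [hc.1], by linarith [hc.2]⟩
    ⟨by linarith [hc.1], hc.2⟩)).intervalIntegrable

variable [NormedSpace ℝ E]

theorem integrableOn_Icc_of_renewal {C : ℝ} (hbdd : ∀ t, 0 ≤ t → ‖q t‖ ≤ C)
    (h01 : IntegrableOn q (Icc 0 1)) (hq : ∀ t, 1 ≤ t → q t = ∫ u in (t - 1)..t, q u)
    (b : ℝ) : IntegrableOn q (Icc 0 b) := by
  set G := {b | IntegrableOn q (Icc 0 b)}
  have hmono : ∀ b ∈ G, ∀ b' ≤ b, b' ∈ G := fun b hb b' hb' =>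
    hb.mono_set (Icc_subset_Icc_right hb')
  by_contra hb
  have hGbdd : BddAbove G := ⟨b, fun x hx => not_lt.1 fun hbx => hb (hmono x hx b hbx.le)⟩
  set t₀ := sSup G
  have ht₀1 : 1 ≤ t₀ := le_csSup hGbdd h01
  have ht₀ : t₀ ∈ G := by
    refine (integrableOn_Icc_iff_integrableOn_Ico).2 (integrableOn_Ico_of_forall_lt
      (fun x hx => hbdd x hx.1) fun c hc => ?_)
    obtain ⟨d, hdG, hcd⟩ := exists_lt_of_lt_csSup ⟨1, h01⟩ hc
    exact hmono d hdG c hcd.le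
  -- past `t₀` the renewal integral is junk, so `q` vanishes there
  have hzero : ∀ v ∈ Ioc t₀ (t₀ + 1), q v = 0 := by
    intro v hv
    by_contra hqv
    have hint : IntervalIntegrable q volume (v - 1) v :=
      intervalIntegral.intervalIntegrable_of_integral_ne_zero (hq v (by linarith [hv.1]) ▸ hqv)
    have hvG : v ∈ G := by
      refine (ht₀.union ((intervalIntegrable_iff_integrableOn_Ioc_of_le (by linarith)).1
        hint)).mono_set fun x hx => ?_
      rcases le_or_gt x t₀ with hxt | hxt
      · exact Or.inl ⟨hx.1, hxt⟩
      · exact Or.inr ⟨by linarith [hv.2], hx.2⟩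
    exact hv.1.not_ge (le_csSup hGbdd hvG)
  have hnext : t₀ + 1 ∈ G := by
    have hIoc : IntegrableOn q (Ioc t₀ (t₀ + 1)) :=
      integrableOn_zero.congr_fun (fun v hv => (hzero v hv).symm) measurableSet_Ioc
    exact (ht₀.union hIoc).mono_set (Icc_subset_Icc_union_Ioc)
  linarith [le_csSup hGbdd hnext]

theorem continuousOn_Icc_of_renewal {b : ℝ} (hint : IntegrableOn q (Icc 0 b))
    (hq : ∀ t, 1 ≤ t → q t = ∫ u in (t - 1)..t, q u) : ContinuousOn q (Icc 1 b) := by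
  intro t ht
  have hb : 0 ≤ b := by linarith [ht.1, ht.2]
  set F := fun s => ∫ u in (0 : ℝ)..s, q u
  have hF : ContinuousOn F (Icc 0 b) := by
    rw [← uIcc_of_le hb] at hint ⊢
    exact intervalIntegral.continuousOn_primitive_interval hint
  have hshift : ContinuousOn (fun s => F s - F (s - 1)) (Icc 1 b) :=
    (hF.mono (Icc_subset_Icc_left zero_le_one)).sub
      (hF.comp (continuousOn_id.sub continuousOn_const)
        fun s hs => ⟨by linarith [hs.1], by linarith [hs.2]⟩)
  refine hshift.congr (fun s hs => ?_) t ht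
  have hII : ∀ x ∈ Icc 0 b, IntervalIntegrable q volume 0 x := fun x hx =>
    (hint.mono_set (uIcc_subset_Icc ⟨le_rfl, hb⟩ hx)).intervalIntegrable
  rw [hq s hs.1]
  exact (intervalIntegral.integral_interval_sub_left (hII s ⟨by linarith [hs.1], hs.2⟩)
    (hII (s - 1) ⟨by linarith [hs.1], by linarith [hs.2]⟩)).symm

end Renewal

section ExpRenewal

variable {q : ℝ → ℝ}

theorem continuousWithinAt_Icc_of_renewal {T c : ℝ}
    (hq1 : ∀ t, 0 ≤ t → t < 1 → q t = exp t) (hcont : ContinuousOn q (Icc 1 T))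
    (hc : c ∈ Icc 0 T) : ContinuousWithinAt q (Icc c T) c := by
  rcases lt_or_ge c 1 with hc1 | hc1
  · have hexp : q =ᶠ[nhdsWithin c (Icc c T)] exp :=
      mem_of_superset (nhdsWithin_mono c Icc_subset_Ici_self (Ico_mem_nhdsGE hc1))
        fun x hx => hq1 x (hc.1.trans hx.1) hx.2
    exact continuous_exp.continuousWithinAt.congr_of_eventuallyEq hexp (hq1 c hc.1 hc1)
  · exact (hcont c ⟨hc1, hc.2⟩).mono (Icc_subset_Icc_left hc1)

theorem renewal_le_exp {T : ℝ} (hq1 : ∀ t, 0 ≤ t → t < 1 → q t = exp t)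
    (hq2 : ∀ t, 1 ≤ t → q t = ∫ u in (t - 1)..t, q u) (hint : IntegrableOn q (Icc 0 T)) :
    ∀ t ∈ Icc 0 T, q t ≤ exp t := by
  have hcont := continuousOn_Icc_of_renewal hint hq2
  have hlt : ∀ t ∈ Icc 1 T, q t < exp t := by
    refine lt_on_Icc_of_forall_Ico (fun c hc => (hcont c hc).mono (Icc_subset_Icc_left hc.1))
      (fun c _ => continuous_exp.continuousWithinAt) fun c hc hbelow => ?_
    have hle : ∀ x ∈ Ioo (c - 1) c, q x ≤ exp x := fun x hx => by
      rcases lt_or_ge x 1 with hx1 | hx1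
      · exact (hq1 x (by linarith [hx.1, hc.1]) hx1).le
      · exact (hbelow x ⟨hx1, hx.2⟩).le
    calc q c = ∫ u in (c - 1)..c, q u := hq2 c hc.1
      _ ≤ ∫ u in (c - 1)..c, exp u :=
        intervalIntegral.integral_mono_on_of_le_Ioo (by linarith)
          (intervalIntegrable_sub_one_of_integrableOn_Icc hint hc)
          (continuous_exp.intervalIntegrable _ _) hle
      _ = exp c - exp (c - 1) := integral_exp
      _ < exp c := sub_lt_self _ (exp_pos _)
  intro t ht
  rcases lt_or_ge t 1 with ht1 | ht1
  · exact (hq1 t ht.1 ht1).le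
  · exact (hlt t ⟨ht1, ht.2⟩).le

end ExpRenewal

theorem abs_sub_exp_lt {η K t R : ℝ} (hη0 : 0 < η) (hη1 : η < 1) (hK : 2 ≤ K) (ht0 : 0 ≤ t)
    (ht1 : t < 1) (hlo : (1 - η) * exp ((1 - η) * t) < R)
    (hhi : R < (1 + η) * exp ((1 + η) * t)) :
    |R - exp t| < K * η * exp ((1 + η) * t) := by
  have hplus : exp ((1 + η) * t) = exp t * exp (η * t) := by rw [← exp_add]; ring_nf
  have hminus : exp ((1 - η) * t) = exp t * exp (-(η * t)) := by rw [← exp_add]; ring_nf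
  rw [hplus] at hhi ⊢
  rw [hminus] at hlo
  have hP := exp_pos t
  have hηt : η * t ≤ η := mul_le_of_le_one_right hη0.le ht1.le
  have hX : 1 ≤ exp (η * t) := one_le_exp (by positivity)
  have hZ : 1 - η ≤ exp (-(η * t)) := by linarith [add_one_le_exp (-(η * t))]
  have hexpη : (1 - η) * exp η ≤ 1 := by
    calc (1 - η) * exp η ≤ exp (-η) * exp η := by gcongr; linarith [add_one_le_exp (-η)]
      _ = 1 := by rw [← exp_add, neg_add_cancel, exp_zero]
  have hupper : (1 + η - K * η) * exp (η * t) ≤ 1 :=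
    calc (1 + η - K * η) * exp (η * t) ≤ (1 - η) * exp (η * t) :=
          mul_le_mul_of_nonneg_right (by nlinarith) (exp_pos _).le
      _ ≤ (1 - η) * exp η := by gcongr
      _ ≤ 1 := hexpη
  have hlower : 1 - (1 - η) * exp (-(η * t)) ≤ K * η * exp (η * t) :=
    calc 1 - (1 - η) * exp (-(η * t)) ≤ 1 - (1 - η) * (1 - η) := by gcongr
      _ ≤ K * η * 1 := by nlinarith
      _ ≤ K * η * exp (η * t) := by gcongr
  rw [abs_sub_lt_iff]
  constructor
  · nlinarith [mul_le_mul_of_nonneg_left hupper hP.le]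
  · nlinarith [mul_le_mul_of_nonneg_left hlower hP.le]

theorem abs_sub_lt_of_renewal_step {r q : ℝ → ℝ} {η K c : ℝ} (hη0 : 0 < η) (hη1 : η < 1)
    (hqi : IntervalIntegrable q volume (c - 1) c)
    (hr : (1 - η) * (∫ u in (c - 1)..c, r u) < r c ∧ r c < (1 + η) * (∫ u in (c - 1)..c, r u))
    (hqc : q c = ∫ u in (c - 1)..c, q u) (hqK : q c ≤ K * exp ((1 + η) * (c - 1)))
    (hbelow : ∀ x ∈ Ioo (c - 1) c, |r x - q x| < K * η * exp ((1 + η) * x)) :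
    |r c - q c| < K * η * exp ((1 + η) * c) := by
  obtain ⟨hlo, hhi⟩ := hr
  have hri : IntervalIntegrable r volume (c - 1) c :=
    intervalIntegral.intervalIntegrable_of_integral_ne_zero fun h => by
      rw [h] at hlo hhi; linarith
  set J := ∫ x in (c - 1)..c, K * η * exp ((1 + η) * x) with hJdef
  have hJ : (1 + η) * J = K * η * (exp ((1 + η) * c) - exp ((1 + η) * (c - 1))) := by
    rw [hJdef, intervalIntegral.integral_const_mul, mul_left_comm,
      mul_integral_exp_mul (by linarith)]
  have habs : ∫ x in (c - 1)..c, |r x - q x| ≤ J :=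
    intervalIntegral.integral_mono_on_of_le_Ioo (by linarith) (hri.sub hqi).abs
      (by apply Continuous.intervalIntegrable; fun_prop) fun x hx => (hbelow x hx).le
  have hJ0 : 0 ≤ J :=
    (intervalIntegral.integral_nonneg (by linarith) fun x _ => abs_nonneg _).trans habs
  have hdiff : |(∫ u in (c - 1)..c, r u) - q c| ≤ J := by
    rw [hqc, ← intervalIntegral.integral_sub hri hqi]
    exact (intervalIntegral.abs_integral_le_integral_abs (by linarith)).trans habs
  obtain ⟨hdiff_lo, hdiff_hi⟩ := abs_le.1 hdiff
  rw [abs_sub_lt_iff]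
  constructor
  · nlinarith [mul_le_mul_of_nonneg_left hqK hη0.le]
  · nlinarith [mul_le_mul_of_nonneg_left hqK hη0.le]

/-- If `r : [0,T] → ℝ` is right continuous, satisfies the approximate renewal inequalities
with parameter `0 < η < 1`, then `sup_{t∈[0,T]} |r t - q t| ≤ 4 η e^{(1+η) T}`, where `q` is
the unique bounded solution of the renewal equation. -/
theorem stmt5 (η T : ℝ) (hη0 : 0 < η) (hη1 : η < 1)
    (r q : ℝ → ℝ)
    (hrc : ∀ t, 0 ≤ t → t ≤ T → ContinuousWithinAt r (Set.Icc t T) t)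
    (hra : ∀ t, 0 ≤ t → t < 1 → t ≤ T →
      (1 - η) * Real.exp ((1 - η) * t) < r t ∧ r t < (1 + η) * Real.exp ((1 + η) * t))
    (hrb : ∀ t, 1 ≤ t → t ≤ T →
      (1 - η) * (∫ u in (t - 1)..t, r u) < r t ∧ r t < (1 + η) * (∫ u in (t - 1)..t, r u))
    (hq0 : ∀ t, 0 ≤ t → 0 ≤ q t)
    (hqb : ∃ C : ℝ, ∀ t, 0 ≤ t → q t ≤ C)
    (hq1 : ∀ t, 0 ≤ t → t < 1 → q t = Real.exp t)
    (hq2 : ∀ t, 1 ≤ t → q t = ∫ u in (t - 1)..t, q u) :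
    ∀ t, 0 ≤ t → t ≤ T → |r t - q t| ≤ 4 * η * Real.exp ((1 + η) * T) := by
  obtain ⟨C, hqC⟩ := hqb
  have h01 : IntegrableOn q (Icc 0 1) :=
    (integrableOn_Icc_iff_integrableOn_Ico).2 <|
      (continuous_exp.integrableOn_Icc.mono_set Ico_subset_Icc_self).congr_fun
        (fun x hx => (hq1 x hx.1 hx.2).symm) measurableSet_Ico
  have hint : IntegrableOn q (Icc 0 T) := integrableOn_Icc_of_renewal
    (fun t ht => (Real.norm_of_nonneg (hq0 t ht)).trans_le (hqC t ht)) h01 hq2 T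
  have hcont : ∀ c ∈ Icc 0 T, ContinuousWithinAt q (Icc c T) c := fun c hc =>
    continuousWithinAt_Icc_of_renewal hq1 (continuousOn_Icc_of_renewal hint hq2) hc
  have hbound : ∀ t ∈ Icc 0 T, |r t - q t| < 4 * η * exp ((1 + η) * t) := by
    refine lt_on_Icc_of_forall_Ico (fun c hc => ((hrc c hc.1 hc.2).sub (hcont c hc)).abs)
      (fun c _ => (by fun_prop : Continuous _).continuousWithinAt) fun c hc hbelow => ?_
    rcases lt_or_ge c 1 with hc1 | hc1
    · rw [hq1 c hc.1 hc1]
      exact abs_sub_exp_lt hη0 hη1 (by norm_num) hc.1 hc1 (hra c hc.1 hc1 hc.2).1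
        (hra c hc.1 hc1 hc.2).2
    · refine abs_sub_lt_of_renewal_step hη0 hη1
        (intervalIntegrable_sub_one_of_integrableOn_Icc hint ⟨hc1, hc.2⟩) (hrb c hc1 hc.2)
        (hq2 c hc1) ?_ fun x hx => hbelow x ⟨by linarith [hx.1], hx.2⟩
      calc q c ≤ exp c := renewal_le_exp hq1 hq2 hint c hc
        _ = exp 1 * exp (c - 1) := by rw [← exp_add, add_sub_cancel]
        _ ≤ 4 * exp ((1 + η) * (c - 1)) := by
          gcongr
          · linarith [exp_one_lt_d9]
          · nlinarith
  intro t ht0 htT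
  calc |r t - q t| ≤ 4 * η * exp ((1 + η) * t) := (hbound t ⟨ht0, htT⟩).le
    _ ≤ 4 * η * exp ((1 + η) * T) := by gcongr
end

section
/- Let f_0, f_1, f_2, ... be nonnegative measurable functions on [0,∞) with f_0(t) ≤ N for all t, and suppose f_j(t) ≤ ∫_0^t μ e^{sj(t−u)} f_{j−1}(u) du for all j ≥ 1 and t ≥ 0, where μ, s > 0. Then f_j(t) ≤ N μ^j (e^{st} − 1)^j / (s^j j!) for all j ≥ 0 and t ≥ 0. -/
/-!
Induction on `j`. If `f_j ≤ B_j` with `B_j(u) = C_j (e^{su} - 1)^j`, then the recursion bounds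
`f_{j+1}(t)` by `μ C_j ∫_0^t e^{s(j+1)(t-u)} (e^{su} - 1)^j du`, and the substitution
`w = e^{st} - e^{s(t-u)}` turns this integral into `∫_0^{e^{st}-1} w^j dw / s`, which gives `B_{j+1}(t)`.
-/

open MeasureTheory Real Set

theorem intervalIntegral_mono_of_nonneg {f g : ℝ → ℝ} {a b : ℝ} (hab : a ≤ b)
    (hf : ∀ u ∈ Ioc a b, 0 ≤ f u) (hfg : ∀ u ∈ Ioc a b, f u ≤ g u)
    (hg : IntervalIntegrable g volume a b) :
    ∫ u in a..b, f u ≤ ∫ u in a..b, g u := by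
  rw [intervalIntegral.integral_of_le hab, intervalIntegral.integral_of_le hab]
  exact setIntegral_mono_of_nonneg hf hfg hg.1

theorem integral_exp_mul_exp_sub_one_pow {s : ℝ} (hs : s ≠ 0) (j : ℕ) (t : ℝ) :
    ∫ u in (0 : ℝ)..t, exp (s * (j + 1) * (t - u)) * (exp (s * u) - 1) ^ j =
      (exp (s * t) - 1) ^ (j + 1) / ((j + 1) * s) := by
  let w : ℝ → ℝ := fun u ↦ exp (s * t) - exp (s * (t - u))
  have hw : ∀ u, HasDerivAt w (exp (s * (t - u)) * s) u := fun u ↦ by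
    simpa using ((((hasDerivAt_id u).const_sub t).const_mul s).exp.const_sub (exp (s * t)))
  have hintegrand : ∀ u, exp (s * (j + 1) * (t - u)) * (exp (s * u) - 1) ^ j =
      s⁻¹ * (((· ^ j) ∘ w) u * (exp (s * (t - u)) * s)) := fun u ↦ by
    have hwu : w u = exp (s * (t - u)) * (exp (s * u) - 1) := by
      simp only [w, mul_sub, ← exp_add]; ring_nf
    rw [Function.comp_apply, hwu,
      show s * (j + 1) * (t - u) = ((j + 1 : ℕ) : ℝ) * (s * (t - u)) by push_cast; ring,
      exp_nat_mul, mul_pow, pow_succ]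
    field_simp
  simp_rw [hintegrand, intervalIntegral.integral_const_mul,
    intervalIntegral.integral_comp_mul_deriv (fun u _ ↦ hw u) (by fun_prop) (continuous_pow j),
    integral_pow]
  simp [w]
  field_simp

noncomputable def momentBound (N μ s : ℝ) (j : ℕ) (t : ℝ) : ℝ :=
  N * μ ^ j * (exp (s * t) - 1) ^ j / (s ^ j * (Nat.factorial j : ℝ))

@[fun_prop]
theorem continuous_momentBound (N μ s : ℝ) (j : ℕ) : Continuous (momentBound N μ s j) := by
  unfold momentBound
  fun_prop

theorem integral_exp_mul_momentBound (N μ : ℝ) {s : ℝ} (hs : s ≠ 0) (j : ℕ) (t : ℝ) :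
    ∫ u in (0 : ℝ)..t, μ * exp (s * ((j + 1 : ℕ) : ℝ) * (t - u)) * momentBound N μ s j u =
      momentBound N μ s (j + 1) t := by
  have hintegrand : ∀ u, μ * exp (s * ((j + 1 : ℕ) : ℝ) * (t - u)) * momentBound N μ s j u =
      N * μ ^ (j + 1) / (s ^ j * (Nat.factorial j : ℝ)) *
        (exp (s * (j + 1) * (t - u)) * (exp (s * u) - 1) ^ j) := fun u ↦ by
    unfold momentBound
    push_cast
    ring
  simp_rw [hintegrand, intervalIntegral.integral_const_mul,
    integral_exp_mul_exp_sub_one_pow hs, momentBound, Nat.factorial_succ]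
  push_cast
  field_simp
  ring

theorem stmt10_general (N μ s : ℝ) (hμ : 0 < μ) (hs : 0 < s)
    (f : ℕ → ℝ → ℝ)
    (hnonneg : ∀ j t, 0 ≤ t → 0 ≤ f j t)
    (h0 : ∀ t, 0 ≤ t → f 0 t ≤ N)
    (hrec : ∀ j : ℕ, 1 ≤ j → ∀ t, 0 ≤ t →
      f j t ≤ ∫ u in (0 : ℝ)..t, μ * Real.exp (s * (j : ℝ) * (t - u)) * f (j - 1) u) :
    ∀ j : ℕ, ∀ t, 0 ≤ t →
      f j t ≤ N * μ ^ j * (Real.exp (s * t) - 1) ^ j / (s ^ j * (Nat.factorial j : ℝ)) := by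
  suffices ∀ j t, 0 ≤ t → f j t ≤ momentBound N μ s j t from this
  intro j
  induction j with
  | zero => simpa [momentBound] using h0
  | succ j ih =>
    intro t ht
    calc f (j + 1) t
        ≤ ∫ u in (0 : ℝ)..t, μ * Real.exp (s * ((j + 1 : ℕ) : ℝ) * (t - u)) * f j u :=
          hrec (j + 1) j.succ_pos t ht
      _ ≤ ∫ u in (0 : ℝ)..t,
            μ * Real.exp (s * ((j + 1 : ℕ) : ℝ) * (t - u)) * momentBound N μ s j u := by
          refine intervalIntegral_mono_of_nonneg ht (fun u hu ↦ ?_) (fun u hu ↦ ?_)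
            (Continuous.intervalIntegrable (by fun_prop) 0 t)
          · have := hnonneg j u hu.1.le
            positivity
          · have := ih u hu.1.le
            gcongr
      _ = momentBound N μ s (j + 1) t := integral_exp_mul_momentBound N μ hs.ne' j t

/-- Deterministic core of the first-moment bound: if `f 0 ≤ N` and
`f j t ≤ ∫_0^t μ e^{sj(t-u)} f (j-1) u du` for all `j ≥ 1`, `t ≥ 0`, then
`f j t ≤ N μ^j (e^{st}-1)^j / (s^j j!)`. -/
theorem stmt10 (N μ s : ℝ) (hN : 0 < N) (hμ : 0 < μ) (hs : 0 < s)
    (f : ℕ → ℝ → ℝ)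
    (hmeas : ∀ j, Measurable (f j))
    (hnonneg : ∀ j t, 0 ≤ t → 0 ≤ f j t)
    (h0 : ∀ t, 0 ≤ t → f 0 t ≤ N)
    (hrec : ∀ j : ℕ, 1 ≤ j → ∀ t, 0 ≤ t →
      f j t ≤ ∫ u in (0 : ℝ)..t, μ * Real.exp (s * (j : ℝ) * (t - u)) * f (j - 1) u) :
    ∀ j : ℕ, ∀ t, 0 ≤ t →
      f j t ≤ N * μ ^ j * (Real.exp (s * t) - 1) ^ j / (s ^ j * (Nat.factorial j : ℝ)) :=
  stmt10_general N μ s hμ hs f hnonneg h0 hrec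
end

section
/- Under assumptions A1–A3 on the sequences (s_N), (μ_N) (as in the model with μ_N < s_N, both in (0,1)), one has log(1/s_N)/log(s_N/μ_N) → 0 as N → ∞; consequently log(s_N/μ_N) ~ log(1/μ_N), and for every a > 0 one has μ_N/s_N^a → 0 as N → ∞. -/
/-!
Write `n = log N`, `L = log (s/μ)` and `ℓ = log (1/s)`. Since `(n/L)² = n · (n/L²)` and
`q log q ≥ q - 1`, assumption A2 bounds `(n/L²) · log n` by a constant, so `n/L² → 0` and in
particular `L ≥ √n → ∞`. Then `ℓ/L = (n/(Lℓ))⁻¹ · (n/L²) → 0` by A1. The remaining claims follow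
from `log (1/μ) = L + ℓ` and `μ / s^a = exp ((a - 1)ℓ - L)`.
-/

open Filter Real Topology

section Asymptotics

variable {ι : Type*} {l : Filter ι}

lemma div_sq_mul_log_le {n L : ℝ} (hn : 0 < n) (hL : L ≠ 0) :
    n / L ^ 2 * log n ≤ 2 * (n / L ^ 2 * log (n / L)) + 1 := by
  set q := n / L ^ 2 with hq_def
  have hq : 0 < q := by positivity
  have hlog : 2 * log (n / L) = log n + log q := by
    rw [← log_mul hn.ne' hq.ne', hq_def, show n * (n / L ^ 2) = (n / L) ^ 2 by ring, log_pow]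
    push_cast
    ring
  have hqlogq : q - 1 ≤ q * log q := by
    have := mul_le_mul_of_nonneg_left (one_sub_inv_le_log_of_pos hq) hq.le
    rwa [mul_sub, mul_one, mul_inv_cancel₀ hq.ne'] at this
  nlinarith

lemma tendsto_div_sq_nhds_zero {n L : ι → ℝ} (hn : Tendsto n l atTop) (hL : ∀ i, L i ≠ 0)
    (h : Tendsto (fun i => n i / L i ^ 2 * log (n i / L i)) l (𝓝 0)) :
    Tendsto (fun i => n i / L i ^ 2) l (𝓝 0) := by
  have hbound : Tendsto (fun i => (2 * (n i / L i ^ 2 * log (n i / L i)) + 1) / log (n i)) l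
      (𝓝 0) :=
    ((h.const_mul 2).add_const 1).div_atTop (tendsto_log_atTop.comp hn)
  refine squeeze_zero' ?_ ?_ hbound
  · filter_upwards [hn.eventually_gt_atTop 0] with i hi
    positivity
  · filter_upwards [hn.eventually_gt_atTop 1] with i hi
    rw [le_div_iff₀ (log_pos hi)]
    exact div_sq_mul_log_le (one_pos.trans hi) (hL i)

lemma tendsto_atTop_of_div_sq {n L : ι → ℝ} (hn : Tendsto n l atTop) (hL : ∀ i, 0 < L i)
    (h : Tendsto (fun i => n i / L i ^ 2) l (𝓝 0)) : Tendsto L l atTop := by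
  refine tendsto_atTop_mono' l ?_ (tendsto_sqrt_atTop.comp hn)
  filter_upwards [h.eventually (ge_mem_nhds one_pos)] with i hi
  rw [div_le_one (pow_pos (hL i) 2)] at hi
  exact (sqrt_le_left (hL i).le).mpr hi

lemma tendsto_div_nhds_zero_of_div_mul_atTop {n L ℓ : ι → ℝ} (hn : ∀ᶠ i in l, n i ≠ 0)
    (hL : ∀ i, L i ≠ 0) (h₁ : Tendsto (fun i => n i / (L i * ℓ i)) l atTop)
    (h₂ : Tendsto (fun i => n i / L i ^ 2) l (𝓝 0)) :
    Tendsto (fun i => ℓ i / L i) l (𝓝 0) := by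
  have := h₁.inv_tendsto_atTop.mul h₂
  rw [zero_mul] at this
  refine this.congr' ?_
  filter_upwards [hn] with i hi
  simp only [Pi.inv_apply]
  rcases eq_or_ne (ℓ i) 0 with hℓ | hℓ
  · simp [hℓ]
  · field_simp [hL i]

lemma tendsto_div_add_nhds_one {L ℓ : ι → ℝ} (hL : ∀ i, L i ≠ 0)
    (h : Tendsto (fun i => ℓ i / L i) l (𝓝 0)) :
    Tendsto (fun i => L i / (L i + ℓ i)) l (𝓝 1) := by
  have := (h.const_add 1).inv₀ (by norm_num)
  rw [add_zero, inv_one] at this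
  refine this.congr fun i => ?_
  rw [eq_comm, ← inv_div, add_div, div_self (hL i)]

lemma tendsto_const_mul_sub_atBot {L ℓ : ι → ℝ} (hL : Tendsto L l atTop)
    (h : Tendsto (fun i => ℓ i / L i) l (𝓝 0)) (c : ℝ) :
    Tendsto (fun i => c * ℓ i - L i) l atBot := by
  have hlim : Tendsto (fun i => c * (ℓ i / L i) - 1) l (𝓝 (-1)) := by
    simpa using (h.const_mul c).sub_const 1
  refine (hL.atTop_mul_neg (by norm_num) hlim).congr' ?_
  filter_upwards [hL.eventually_gt_atTop 0] with i hi
  field_simp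

end Asymptotics

lemma log_one_div_eq_log_div_add {s μ : ℝ} (hs : 0 < s) (hμ : 0 < μ) :
    log (1 / μ) = log (s / μ) + log (1 / s) := by
  rw [← log_mul (by positivity) (by positivity)]
  field_simp

lemma div_rpow_eq_exp {s μ : ℝ} (hs : 0 < s) (hμ : 0 < μ) (a : ℝ) :
    μ / s ^ a = exp ((a - 1) * log (1 / s) - log (s / μ)) := by
  rw [log_div hs.ne' hμ.ne', one_div, log_inv, rpow_def_of_pos hs, ← exp_log hμ, ← exp_sub,
    log_exp]
  ring_nf

theorem stmt16_general (s μ : ℕ → ℝ)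
    (hs : ∀ N, 0 < s N ∧ s N < 1) (hμ : ∀ N, 0 < μ N ∧ μ N < 1)
    (hμs : ∀ N, μ N < s N)
    (hA1 : Tendsto (fun N : ℕ =>
        Real.log N / (Real.log (s N / μ N) * Real.log (1 / s N))) atTop atTop)
    (hA2 : Tendsto (fun N : ℕ =>
        Real.log N / (Real.log (s N / μ N)) ^ 2 *
          Real.log (Real.log N / Real.log (s N / μ N))) atTop (nhds 0)) :
    Tendsto (fun N : ℕ => Real.log (1 / s N) / Real.log (s N / μ N)) atTop (nhds 0) ∧
    Tendsto (fun N : ℕ => Real.log (s N / μ N) / Real.log (1 / μ N)) atTop (nhds 1) ∧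
    (∀ a : ℝ, 0 < a →
      Tendsto (fun N : ℕ => μ N / s N ^ a) atTop (nhds 0)) := by
  have hL : ∀ N, 0 < log (s N / μ N) := fun N =>
    log_pos ((one_lt_div (hμ N).1).mpr (hμs N))
  have hn : Tendsto (fun N : ℕ => log N) atTop atTop :=
    tendsto_log_atTop.comp tendsto_natCast_atTop_atTop
  have hq := tendsto_div_sq_nhds_zero hn (fun N => (hL N).ne') hA2
  have hratio := tendsto_div_nhds_zero_of_div_mul_atTop (hn.eventually_ne_atTop 0)
    (fun N => (hL N).ne') hA1 hq
  refine ⟨hratio, ?_, fun a _ => ?_⟩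
  · refine (tendsto_div_add_nhds_one (fun N => (hL N).ne') hratio).congr fun N => ?_
    rw [log_one_div_eq_log_div_add (hs N).1 (hμ N).1]
  · refine (tendsto_exp_atBot.comp (tendsto_const_mul_sub_atBot
      (tendsto_atTop_of_div_sq hn hL hq) hratio (a - 1))).congr fun N => ?_
    exact (div_rpow_eq_exp (hs N).1 (hμ N).1 a).symm

/-- Under A1–A3, `log(1/s_N)/log(s_N/μ_N) → 0`; consequently
`log(s_N/μ_N) ~ log(1/μ_N)`, and for every `a > 0`, `μ_N / s_N^a → 0`. -/
theorem stmt16 (s μ : ℕ → ℝ)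
    (hs : ∀ N, 0 < s N ∧ s N < 1) (hμ : ∀ N, 0 < μ N ∧ μ N < 1)
    (hμs : ∀ N, μ N < s N)
    (hA1 : Tendsto (fun N : ℕ =>
        Real.log N / (Real.log (s N / μ N) * Real.log (1 / s N))) atTop atTop)
    (hA2 : Tendsto (fun N : ℕ =>
        Real.log N / (Real.log (s N / μ N)) ^ 2 *
          Real.log (Real.log N / Real.log (s N / μ N))) atTop (nhds 0))
    (hA3 : Tendsto (fun N : ℕ =>
        s N * Real.log N / Real.log (s N / μ N)) atTop (nhds 0)) :
    Tendsto (fun N : ℕ => Real.log (1 / s N) / Real.log (s N / μ N)) atTop (nhds 0) ∧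
    Tendsto (fun N : ℕ => Real.log (s N / μ N) / Real.log (1 / μ N)) atTop (nhds 1) ∧
    (∀ a : ℝ, 0 < a →
      Tendsto (fun N : ℕ => μ N / s N ^ a) atTop (nhds 0)) :=
  stmt16_general s μ hs hμ hμs hA1 hA2
end
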